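/- arXiv:1404.7536 — 3 statements merged into one kernel-verified Lean document; each statement's English description precedes it below -/
import Mathlib

section
/- Suppose that for every z ∈ F the stochastic quasi-Fejér inequality E[φ(‖x_{n+1} − z‖) | 𝓧_n] + ϑ_n(z) ≤ (1 + χ_n(z)) φ(‖x_n − z‖) + η_n(z) holds P-a.s. for every n ∈ ℕ. Then for every z ∈ F one has Σ_{n∈ℕ} ϑ_n(z) < ∞ P-almost surely. -/
/-!
Robbins–Siegmund argument. With the discount factors `dₙ = ∏_{k<n} (1 + χₖ)⁻¹` and
`fₙ = φ ‖xₙ - z‖`, the process `Vₙ = dₙ fₙ + ∑_{k<n} d_{k+1} (ϑₖ - ηₖ)` is a supermartingale.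
If `∑ₖ (χₖ + ηₖ) ≤ c` on every path, then `Vₙ ≥ -c` and `dₙ ≥ e^{-c}`, so `Vₙ` converges almost
surely; this bounds `∑ d_{k+1} ϑₖ`, hence `∑ ϑₖ`. The general case reduces to this one by
freezing the system once the partial sums of `χ + η` exceed an integer `c`: almost every path is
never frozen when `c` is large enough.
-/

open MeasureTheory Filter Topology
open scoped RealInnerProductSpace

/-- The σ-algebra σ(x_0, …, x_n) generated by the first n+1 terms of a sequence of
random variables. -/
noncomputable def sigmaFinSeq {Ω H : Type*} [m : MeasurableSpace H]
    (x : ℕ → Ω → H) (n : ℕ) : MeasurableSpace Ω :=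
  ⨆ i ∈ Set.Iic n, MeasurableSpace.comap (x i) m

section

open Finset

variable {Ω : Type*} {m0 : MeasurableSpace Ω}

section SigmaFinSeq

variable {H : Type*} [MeasurableSpace H]

theorem sigmaFinSeq_mono (x : ℕ → Ω → H) : Monotone (sigmaFinSeq x) :=
  fun _ _ hab => biSup_mono fun _ hi => le_trans hi hab

theorem sigmaFinSeq_le {x : ℕ → Ω → H} (hx : ∀ n, Measurable (x n)) (n : ℕ) :
    sigmaFinSeq x n ≤ m0 :=
  iSup₂_le fun i _ => (hx i).comap_le

theorem measurable_sigmaFinSeq (x : ℕ → Ω → H) (n : ℕ) : Measurable[sigmaFinSeq x n] (x n) :=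
  measurable_iff_comap_le.2 <|
    le_biSup (fun i => MeasurableSpace.comap (x i) ‹_›) (Set.mem_Iic.2 le_rfl)

noncomputable def sigmaFinSeqFiltration {x : ℕ → Ω → H} (hx : ∀ n, Measurable (x n)) :
    Filtration ℕ m0 :=
  ⟨sigmaFinSeq x, sigmaFinSeq_mono x, sigmaFinSeq_le hx⟩

end SigmaFinSeq

theorem measurable_comp_norm_sub_of_monotoneOn {E : Type*} [NormedAddCommGroup E]
    [MeasurableSpace E] [OpensMeasurableSpace E] {φ : ℝ → ℝ}
    (hφ : MonotoneOn φ (Set.Ici 0)) (z : E) : Measurable fun v : E => φ ‖v - z‖ := by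
  have hmono : Monotone fun t : ℝ => φ (max t 0) := fun s t hst =>
    hφ (le_max_right s 0) (le_max_right t 0) (max_le_max hst le_rfl)
  have h := hmono.measurable.comp (continuous_sub_right z).norm.measurable
  simpa only [Function.comp_def, id, max_eq_left (norm_nonneg _)] using h

theorem integrable_of_nonneg_of_le {μ : Measure Ω} {f g : Ω → ℝ}
    (hf : AEStronglyMeasurable f μ) (h0 : ∀ᵐ ω ∂μ, 0 ≤ f ω) (hle : ∀ᵐ ω ∂μ, f ω ≤ g ω)
    (hg : Integrable g μ) : Integrable f μ :=
  integrable_of_le_of_le hf h0 hle (integrable_zero _ _ μ) hg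

theorem MeasureTheory.Supermartingale.exists_ae_tendsto_of_bdd_below {μ : Measure Ω}
    [IsFiniteMeasure μ] {ℱ : Filtration ℕ m0} {f : ℕ → Ω → ℝ} (hf : Supermartingale f ℱ μ)
    {c : ℝ} (hbdd : ∀ n ω, c ≤ f n ω) :
    ∀ᵐ ω ∂μ, ∃ l, Tendsto (fun n => f n ω) atTop (𝓝 l) := by
  set g := f + fun _ _ => -c
  have hg : Supermartingale g ℱ μ := hf.add_martingale (martingale_const ℱ μ (-c))
  have hg0 : ∀ n ω, 0 ≤ g n ω := fun n ω => by simpa [g, sub_eq_add_neg] using hbdd n ω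
  have hL1 : ∀ n, eLpNorm ((-g) n) 1 μ ≤ (∫ ω, g 0 ω ∂μ).toNNReal := fun n => by
    rw [Pi.neg_apply, eLpNorm_neg, eLpNorm_one_eq_lintegral_enorm]
    simp_rw [Real.enorm_of_nonneg (hg0 n _)]
    rw [← ofReal_integral_eq_lintegral_ofReal (hg.integrable n) (ae_of_all _ (hg0 n))]
    have hmono := hg.setIntegral_le n.zero_le MeasurableSet.univ
    rw [setIntegral_univ, setIntegral_univ] at hmono
    exact ENNReal.ofReal_le_ofReal hmono
  filter_upwards [hg.neg.exists_ae_tendsto_of_bdd hL1] with ω ⟨l, hl⟩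
  exact ⟨-l + c, by simpa [g] using hl.neg.add_const c⟩

theorem le_of_forall_sum_range_le {s : ℕ → ℝ} (hs0 : ∀ n, 0 ≤ s n) {c : ℝ}
    (hs : ∀ n, ∑ k ∈ range n, s k ≤ c) (n : ℕ) : s n ≤ c :=
  (single_le_sum (fun k _ => hs0 k) (self_mem_range_succ n)).trans (hs (n + 1))

namespace RobbinsSiegmund

section Discount

variable {χ : ℕ → Ω → ℝ}

noncomputable def discount (χ : ℕ → Ω → ℝ) (n : ℕ) (ω : Ω) : ℝ :=
  (∏ k ∈ range n, (1 + χ k ω))⁻¹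

theorem discount_pos (hχ : ∀ n ω, 0 ≤ χ n ω) (n : ℕ) (ω : Ω) : 0 < discount χ n ω :=
  inv_pos.2 <| prod_pos fun k _ => by linarith [hχ k ω]

theorem discount_le_one (hχ : ∀ n ω, 0 ≤ χ n ω) (n : ℕ) (ω : Ω) : discount χ n ω ≤ 1 :=
  inv_le_one_of_one_le₀ <| one_le_prod fun k _ => by linarith [hχ k ω]

theorem norm_discount_le_one (hχ : ∀ n ω, 0 ≤ χ n ω) (n : ℕ) (ω : Ω) :
    ‖discount χ n ω‖ ≤ 1 := by
  rw [Real.norm_of_nonneg (discount_pos hχ n ω).le]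
  exact discount_le_one hχ n ω

theorem exp_neg_le_discount (hχ : ∀ n ω, 0 ≤ χ n ω) {c : ℝ}
    (hc : ∀ n ω, ∑ k ∈ range n, χ k ω ≤ c) (n : ℕ) (ω : Ω) :
    Real.exp (-c) ≤ discount χ n ω := by
  rw [Real.exp_neg]
  refine inv_anti₀ (prod_pos fun k _ => by linarith [hχ k ω]) ?_
  exact (Real.prod_one_add_le_exp_sum _ fun k => hχ k ω).trans (Real.exp_le_exp.2 (hc n ω))

theorem discount_succ_mul (hχ : ∀ n ω, 0 ≤ χ n ω) (n : ℕ) (ω : Ω) :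
    discount χ (n + 1) ω * (1 + χ n ω) = discount χ n ω := by
  have : 1 + χ n ω ≠ 0 := by linarith [hχ n ω]
  rw [discount, discount, prod_range_succ, mul_inv, mul_assoc, inv_mul_cancel₀ this, mul_one]

theorem measurable_discount {ℱ : Filtration ℕ m0} (hχ : Adapted ℱ χ) {n k : ℕ}
    (hnk : n ≤ k + 1) : Measurable[ℱ k] (discount χ n) :=
  (measurable_prod _ fun i hi =>
    measurable_const.add (hχ.measurable_le (by grind))).inv

end Discount

section Cutoff

variable {s : ℕ → Ω → ℝ} {c : ℝ}

noncomputable def cutoff (s : ℕ → Ω → ℝ) (c : ℝ) (n : ℕ) (ω : Ω) : ℝ :=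
  if ∑ k ∈ range n, s k ω ≤ c then 1 else 0

theorem cutoff_nonneg (n : ℕ) (ω : Ω) : 0 ≤ cutoff s c n ω := by
  unfold cutoff; split_ifs <;> norm_num

theorem cutoff_le_one (n : ℕ) (ω : Ω) : cutoff s c n ω ≤ 1 := by
  unfold cutoff; split_ifs <;> norm_num

theorem norm_cutoff_le_one (n : ℕ) (ω : Ω) : ‖cutoff s c n ω‖ ≤ 1 := by
  rw [Real.norm_of_nonneg (cutoff_nonneg n ω)]
  exact cutoff_le_one n ω

theorem cutoff_eq_one_of_sum_le {n : ℕ} {ω : Ω} (h : ∑ k ∈ range n, s k ω ≤ c) :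
    cutoff s c n ω = 1 := if_pos h

theorem cutoff_eq_zero_of_lt_sum {n : ℕ} {ω : Ω} (h : c < ∑ k ∈ range n, s k ω) :
    cutoff s c n ω = 0 := if_neg h.not_ge

theorem sum_cutoff_succ_mul_le (hs : ∀ n ω, 0 ≤ s n ω) (hc : 0 ≤ c) (N : ℕ) (ω : Ω) :
    ∑ k ∈ range N, cutoff s c (k + 1) ω * s k ω ≤ c := by
  induction N with
  | zero => simpa using hc
  | succ N ih =>
    rcases le_or_gt (∑ k ∈ range (N + 1), s k ω) c with h | h
    · refine le_trans (sum_le_sum fun k _ => ?_) h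
      exact mul_le_of_le_one_left (hs k ω) (cutoff_le_one _ ω)
    · rwa [sum_range_succ, cutoff_eq_zero_of_lt_sum h, zero_mul, add_zero]

/-- The frozen system `(eₙ fₙ, e_{n+1} χₙ, e_{n+1} ϑₙ, e_{n+1} ηₙ)` inherits the recursive
inequality because `e` is a nonincreasing `0`/`1` sequence. -/
theorem cutoff_succ_mul_add_le (hs : ∀ n ω, 0 ≤ s n ω) {n : ℕ} {ω : Ω} {a t x b y : ℝ}
    (hb : 0 ≤ b) (h : a + t ≤ (1 + x) * b + y) :
    cutoff s c (n + 1) ω * a + cutoff s c (n + 1) ω * t ≤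
      (1 + cutoff s c (n + 1) ω * x) * (cutoff s c n ω * b) + cutoff s c (n + 1) ω * y := by
  rcases le_or_gt (∑ k ∈ range (n + 1), s k ω) c with h1 | h1
  · have h0 : ∑ k ∈ range n, s k ω ≤ c :=
      le_trans (sum_le_sum_of_subset_of_nonneg (range_subset_range.2 n.le_succ)
        fun k _ _ => hs k ω) h1
    rw [cutoff_eq_one_of_sum_le h1, cutoff_eq_one_of_sum_le h0]
    linarith
  · rw [cutoff_eq_zero_of_lt_sum h1]
    simpa using mul_nonneg (cutoff_nonneg n ω) hb

theorem cutoff_eq_one_of_tsum_le (hs : ∀ n ω, 0 ≤ s n ω) {ω : Ω}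
    (hsum : Summable fun n => s n ω) (hc : ∑' n, s n ω ≤ c) (n : ℕ) : cutoff s c n ω = 1 :=
  cutoff_eq_one_of_sum_le <| (hsum.sum_le_tsum _ fun k _ => hs k ω).trans hc

theorem measurable_cutoff {ℱ : Filtration ℕ m0} (hs : Adapted ℱ s) {n k : ℕ}
    (hnk : n ≤ k + 1) : Measurable[ℱ k] (cutoff s c n) :=
  Measurable.ite (measurableSet_le (measurable_sum _ fun i hi =>
    hs.measurable_le (by grind)) measurable_const) measurable_const measurable_const

end Cutoff

section Lyapunov

variable {P : Measure Ω} [IsFiniteMeasure P] {ℱ : Filtration ℕ m0} {f χ ϑ η : ℕ → Ω → ℝ}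

noncomputable def process (f χ ϑ η : ℕ → Ω → ℝ) (n : ℕ) (ω : Ω) : ℝ :=
  discount χ n ω * f n ω + ∑ k ∈ range n, discount χ (k + 1) ω * (ϑ k ω - η k ω)

theorem supermartingale_process (hχ0 : ∀ n ω, 0 ≤ χ n ω) (hfa : Adapted ℱ f)
    (hχa : Adapted ℱ χ) (hϑa : Adapted ℱ ϑ) (hηa : Adapted ℱ η) (hfi : ∀ n, Integrable (f n) P)
    (hϑi : ∀ n, Integrable (ϑ n) P) (hηi : ∀ n, Integrable (η n) P)
    (hineq : ∀ᵐ ω ∂P, ∀ n, P[f (n + 1) | ℱ n] ω + ϑ n ω ≤ (1 + χ n ω) * f n ω + η n ω) :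
    Supermartingale (process f χ ϑ η) ℱ P := by
  set D : ℕ → Ω → ℝ := fun n ω => ∑ k ∈ range n, discount χ (k + 1) ω * (ϑ k ω - η k ω)
  have hD_meas : ∀ {n m}, n ≤ m + 1 → Measurable[ℱ m] (D n) := fun hnm =>
    measurable_sum _ fun k hk => (measurable_discount hχa (by grind)).mul
      ((hϑa.measurable_le (by grind)).sub (hηa.measurable_le (by grind)))
  have hd_bdd : ∀ n, ∀ᵐ ω ∂P, ‖discount χ n ω‖ ≤ 1 := fun n =>
    ae_of_all _ (norm_discount_le_one hχ0 n)
  have hd_meas : ∀ n, AEStronglyMeasurable (discount χ n) P := fun n =>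
    ((measurable_discount hχa n.le_succ).mono (ℱ.le n) le_rfl).aestronglyMeasurable
  have hD_int : ∀ n, Integrable (D n) P := fun n => integrable_finsetSum _ fun k _ =>
    ((hϑi k).sub (hηi k)).bdd_mul (hd_meas _) (hd_bdd _)
  have hdf_meas : ∀ n, Measurable[ℱ n] fun ω => discount χ n ω * f n ω := fun n =>
    (measurable_discount hχa n.le_succ).mul (hfa n)
  have hdf_int : ∀ n, Integrable (fun ω => discount χ n ω * f n ω) P := fun n =>
    (hfi n).bdd_mul (hd_meas n) (hd_bdd n)
  have hsplit : ∀ n, process f χ ϑ η n = (fun ω => discount χ n ω * f n ω) + D n := fun n => rfl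
  refine supermartingale_nat
    (fun n => ((hdf_meas n).add (hD_meas n.le_succ)).stronglyMeasurable)
    (fun n => (hdf_int n).add (hD_int n)) fun n => ?_
  have hcond : P[process f χ ϑ η (n + 1) | ℱ n] =ᵐ[P]
      fun ω => discount χ (n + 1) ω * P[f (n + 1) | ℱ n] ω + D (n + 1) ω := by
    rw [hsplit]
    refine (condExp_add (hdf_int _) (hD_int _) _).trans ?_
    rw [condExp_of_stronglyMeasurable (ℱ.le n) (hD_meas le_rfl).stronglyMeasurable (hD_int _)]
    filter_upwards [condExp_mul_of_stronglyMeasurable_left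
      (measurable_discount hχa le_rfl).stronglyMeasurable (hdf_int (n + 1)) (hfi (n + 1))]
      with ω hω
    exact congrArg (· + D (n + 1) ω) hω
  filter_upwards [hcond, hineq] with ω hω hineqω
  have hstep := mul_le_mul_of_nonneg_left (hineqω n) (discount_pos hχ0 (n + 1) ω).le
  have hD_succ : D (n + 1) ω = D n ω + discount χ (n + 1) ω * (ϑ n ω - η n ω) :=
    sum_range_succ _ _
  rw [hω, hsplit, Pi.add_apply, hD_succ]
  -- `d_{n+1} (1 + χₙ) = dₙ` absorbs the factor `1 + χₙ` of the recursive inequality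
  linear_combination hstep + f n ω * discount_succ_mul hχ0 n ω

theorem sum_discount_mul_le_sum (hχ0 : ∀ n ω, 0 ≤ χ n ω) (hη0 : ∀ n ω, 0 ≤ η n ω) (n : ℕ)
    (ω : Ω) : ∑ k ∈ range n, discount χ (k + 1) ω * η k ω ≤ ∑ k ∈ range n, η k ω :=
  sum_le_sum fun k _ => mul_le_of_le_one_left (hη0 k ω) (discount_le_one hχ0 _ ω)

variable (f χ ϑ η) in
theorem process_eq_add_sub (n : ℕ) (ω : Ω) :
    process f χ ϑ η n ω = discount χ n ω * f n ω + ∑ k ∈ range n, discount χ (k + 1) ω * ϑ k ω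
      - ∑ k ∈ range n, discount χ (k + 1) ω * η k ω := by
  rw [process, add_sub_assoc, ← sum_sub_distrib]
  simp only [mul_sub]

theorem neg_le_process (hf0 : ∀ n ω, 0 ≤ f n ω) (hχ0 : ∀ n ω, 0 ≤ χ n ω)
    (hϑ0 : ∀ n ω, 0 ≤ ϑ n ω) (hη0 : ∀ n ω, 0 ≤ η n ω) {c : ℝ}
    (hηc : ∀ n ω, ∑ k ∈ range n, η k ω ≤ c) (n : ℕ) (ω : Ω) : -c ≤ process f χ ϑ η n ω := by
  have hdf := mul_nonneg (discount_pos hχ0 n ω).le (hf0 n ω)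
  have hdϑ : 0 ≤ ∑ k ∈ range n, discount χ (k + 1) ω * ϑ k ω :=
    sum_nonneg fun k _ => mul_nonneg (discount_pos hχ0 _ ω).le (hϑ0 k ω)
  linarith [process_eq_add_sub f χ ϑ η n ω, sum_discount_mul_le_sum hχ0 hη0 n ω, hηc n ω]

theorem sum_discount_mul_le_process (hf0 : ∀ n ω, 0 ≤ f n ω) (hχ0 : ∀ n ω, 0 ≤ χ n ω)
    (hη0 : ∀ n ω, 0 ≤ η n ω) {c : ℝ} (hηc : ∀ n ω, ∑ k ∈ range n, η k ω ≤ c) (n : ℕ) (ω : Ω) :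
    ∑ k ∈ range n, discount χ (k + 1) ω * ϑ k ω ≤ process f χ ϑ η n ω + c := by
  have hdf := mul_nonneg (discount_pos hχ0 n ω).le (hf0 n ω)
  linarith [process_eq_add_sub f χ ϑ η n ω, sum_discount_mul_le_sum hχ0 hη0 n ω, hηc n ω]

theorem integrable_of_forall_le (hf0 : ∀ n ω, 0 ≤ f n ω) (hϑ0 : ∀ n ω, 0 ≤ ϑ n ω)
    (hϑa : Adapted ℱ ϑ) (hfi : ∀ n, Integrable (f n) P) {c : ℝ} (hχc : ∀ n ω, χ n ω ≤ c)
    (hηc : ∀ n ω, η n ω ≤ c)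
    (hineq : ∀ᵐ ω ∂P, ∀ n, P[f (n + 1) | ℱ n] ω + ϑ n ω ≤ (1 + χ n ω) * f n ω + η n ω)
    (n : ℕ) : Integrable (ϑ n) P := by
  refine integrable_of_nonneg_of_le (hϑa.measurable (i := n)).aestronglyMeasurable
    (ae_of_all _ (hϑ0 n)) ?_ (((hfi n).const_mul (1 + c)).add (integrable_const c))
  filter_upwards [hineq, condExp_nonneg (m := ℱ n) (ae_of_all P (hf0 (n + 1)))] with ω hω hE
  have hχf := mul_le_mul_of_nonneg_right (add_le_add_left (hχc n ω) 1) (hf0 n ω)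
  simp only [Pi.zero_apply] at hE
  simp only [Pi.add_apply]
  linarith [hω n, hηc n ω]

end Lyapunov

structure IsStochasticQuasiFejer (P : Measure Ω) (ℱ : Filtration ℕ m0) (f χ ϑ η : ℕ → Ω → ℝ) :
    Prop where
  f_nonneg : ∀ n ω, 0 ≤ f n ω
  χ_nonneg : ∀ n ω, 0 ≤ χ n ω
  ϑ_nonneg : ∀ n ω, 0 ≤ ϑ n ω
  η_nonneg : ∀ n ω, 0 ≤ η n ω
  adapted_f : Adapted ℱ f
  adapted_χ : Adapted ℱ χ
  adapted_ϑ : Adapted ℱ ϑ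
  adapted_η : Adapted ℱ η
  integrable_f : ∀ n, Integrable (f n) P
  condExp_add_le : ∀ᵐ ω ∂P, ∀ n, P[f (n + 1) | ℱ n] ω + ϑ n ω ≤ (1 + χ n ω) * f n ω + η n ω

namespace IsStochasticQuasiFejer

variable {P : Measure Ω} {ℱ : Filtration ℕ m0} {f χ ϑ η : ℕ → Ω → ℝ}

theorem cutoff (h : IsStochasticQuasiFejer P ℱ f χ ϑ η) (c : ℝ) :
    IsStochasticQuasiFejer P ℱ (fun n ω => RobbinsSiegmund.cutoff (χ + η) c n ω * f n ω)
      (fun n ω => RobbinsSiegmund.cutoff (χ + η) c (n + 1) ω * χ n ω)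
      (fun n ω => RobbinsSiegmund.cutoff (χ + η) c (n + 1) ω * ϑ n ω)
      (fun n ω => RobbinsSiegmund.cutoff (χ + η) c (n + 1) ω * η n ω) := by
  set e := RobbinsSiegmund.cutoff (χ + η) c
  have he_meas : ∀ {n m}, n ≤ m + 1 → Measurable[ℱ m] (e n) :=
    measurable_cutoff fun n => (h.adapted_χ n).add (h.adapted_η n)
  have hef_int : ∀ n, Integrable (fun ω => e n ω * f n ω) P := fun n =>
    (h.integrable_f n).bdd_mul ((he_meas n.le_succ).mono (ℱ.le n) le_rfl).aestronglyMeasurable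
      (ae_of_all _ (norm_cutoff_le_one n))
  have hpull : ∀ n, P[fun ω => e (n + 1) ω * f (n + 1) ω | ℱ n] =ᵐ[P]
      fun ω => e (n + 1) ω * P[f (n + 1) | ℱ n] ω := fun n =>
    condExp_mul_of_stronglyMeasurable_left (he_meas le_rfl).stronglyMeasurable
      (hef_int (n + 1)) (h.integrable_f (n + 1))
  refine ⟨fun n ω => mul_nonneg (cutoff_nonneg n ω) (h.f_nonneg n ω),
    fun n ω => mul_nonneg (cutoff_nonneg _ ω) (h.χ_nonneg n ω),
    fun n ω => mul_nonneg (cutoff_nonneg _ ω) (h.ϑ_nonneg n ω),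
    fun n ω => mul_nonneg (cutoff_nonneg _ ω) (h.η_nonneg n ω),
    fun n => (he_meas n.le_succ).mul (h.adapted_f n),
    fun n => (he_meas le_rfl).mul (h.adapted_χ n), fun n => (he_meas le_rfl).mul (h.adapted_ϑ n),
    fun n => (he_meas le_rfl).mul (h.adapted_η n), hef_int, ?_⟩
  filter_upwards [h.condExp_add_le, ae_all_iff.2 hpull] with ω hω hpullω n
  rw [hpullω n]
  exact cutoff_succ_mul_add_le (fun n ω => add_nonneg (h.χ_nonneg n ω) (h.η_nonneg n ω))
    (h.f_nonneg n ω) (hω n)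

variable [IsFiniteMeasure P]

theorem ae_summable_of_sum_le (h : IsStochasticQuasiFejer P ℱ f χ ϑ η) {c : ℝ}
    (hc : ∀ n ω, ∑ k ∈ range n, (χ k ω + η k ω) ≤ c) :
    ∀ᵐ ω ∂P, Summable fun n => ϑ n ω := by
  have hχc : ∀ n ω, ∑ k ∈ range n, χ k ω ≤ c := fun n ω =>
    (sum_le_sum fun k _ => le_add_of_nonneg_right (h.η_nonneg k ω)).trans (hc n ω)
  have hηc : ∀ n ω, ∑ k ∈ range n, η k ω ≤ c := fun n ω =>
    (sum_le_sum fun k _ => le_add_of_nonneg_left (h.χ_nonneg k ω)).trans (hc n ω)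
  have hηi : ∀ n, Integrable (η n) P := fun n =>
    integrable_of_nonneg_of_le (h.adapted_η.measurable (i := n)).aestronglyMeasurable
      (ae_of_all _ (h.η_nonneg n))
      (ae_of_all _ fun ω => le_of_forall_sum_range_le (h.η_nonneg · ω) (hηc · ω) n)
      (integrable_const c)
  have hϑi := integrable_of_forall_le h.f_nonneg h.ϑ_nonneg h.adapted_ϑ h.integrable_f
    (fun n ω => le_of_forall_sum_range_le (h.χ_nonneg · ω) (hχc · ω) n)
    (fun n ω => le_of_forall_sum_range_le (h.η_nonneg · ω) (hηc · ω) n) h.condExp_add_le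
  have hV := supermartingale_process h.χ_nonneg h.adapted_f h.adapted_χ h.adapted_ϑ h.adapted_η
    h.integrable_f hϑi hηi h.condExp_add_le
  filter_upwards [hV.exists_ae_tendsto_of_bdd_below
    (neg_le_process h.f_nonneg h.χ_nonneg h.ϑ_nonneg h.η_nonneg hηc)] with ω ⟨l, hl⟩
  obtain ⟨M, hM⟩ := hl.bddAbove_range
  have hsum : Summable fun k => discount χ (k + 1) ω * ϑ k ω :=
    summable_of_sum_range_le
      (fun k => mul_nonneg (discount_pos h.χ_nonneg _ ω).le (h.ϑ_nonneg k ω)) fun n =>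
        (sum_discount_mul_le_process h.f_nonneg h.χ_nonneg h.η_nonneg hηc n ω).trans
          (add_le_add_left (hM ⟨n, rfl⟩) c)
  refine (hsum.mul_left (Real.exp c)).of_nonneg_of_le (h.ϑ_nonneg · ω) fun k => ?_
  calc ϑ k ω = Real.exp c * (Real.exp (-c) * ϑ k ω) := by
        rw [← mul_assoc, ← Real.exp_add, add_neg_cancel, Real.exp_zero, one_mul]
    _ ≤ Real.exp c * (discount χ (k + 1) ω * ϑ k ω) := by
        gcongr
        · exact h.ϑ_nonneg k ω
        · exact exp_neg_le_discount h.χ_nonneg hχc _ ω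

theorem ae_summable (h : IsStochasticQuasiFejer P ℱ f χ ϑ η)
    (hχs : ∀ᵐ ω ∂P, Summable fun n => χ n ω) (hηs : ∀ᵐ ω ∂P, Summable fun n => η n ω) :
    ∀ᵐ ω ∂P, Summable fun n => ϑ n ω := by
  have hs0 : ∀ n ω, 0 ≤ (χ + η) n ω := fun n ω => add_nonneg (h.χ_nonneg n ω) (h.η_nonneg n ω)
  have hcut : ∀ c : ℕ, ∀ᵐ ω ∂P,
      Summable fun n => RobbinsSiegmund.cutoff (χ + η) c (n + 1) ω * ϑ n ω := fun c =>
    (h.cutoff c).ae_summable_of_sum_le fun n ω => by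
      simpa only [Pi.add_apply, mul_add] using sum_cutoff_succ_mul_le hs0 c.cast_nonneg n ω
  filter_upwards [ae_all_iff.2 hcut, hχs, hηs] with ω hω hχω hηω
  have hone := cutoff_eq_one_of_tsum_le hs0 (hχω.add hηω) (Nat.le_ceil _)
  simpa only [hone, one_mul] using hω ⌈∑' n, (χ + η) n ω⌉₊

end IsStochasticQuasiFejer

end RobbinsSiegmund

end

theorem stochastic_quasiFejer_summable_theta_general
    {H : Type*} [NormedAddCommGroup H] [MeasurableSpace H] [BorelSpace H]
    {Ω : Type*} [MeasurableSpace Ω] (P : Measure Ω) [IsProbabilityMeasure P]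
    (F : Set H)
    (φ : ℝ → ℝ) (hφmono : StrictMonoOn φ (Set.Ici (0 : ℝ)))
    (hφnonneg : ∀ t, 0 ≤ t → 0 ≤ φ t)
    (x : ℕ → Ω → H) (hxm : ∀ n, Measurable (x n))
    (χ ϑ η : H → ℕ → Ω → ℝ)
    (hχnonneg : ∀ z ∈ F, ∀ n, ∀ ω, 0 ≤ χ z n ω)
    (hϑnonneg : ∀ z ∈ F, ∀ n, ∀ ω, 0 ≤ ϑ z n ω)
    (hηnonneg : ∀ z ∈ F, ∀ n, ∀ ω, 0 ≤ η z n ω)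
    (hχmeas : ∀ z ∈ F, ∀ n, Measurable[sigmaFinSeq x n] (χ z n))
    (hϑmeas : ∀ z ∈ F, ∀ n, Measurable[sigmaFinSeq x n] (ϑ z n))
    (hηmeas : ∀ z ∈ F, ∀ n, Measurable[sigmaFinSeq x n] (η z n))
    (hχsum : ∀ z ∈ F, ∀ᵐ ω ∂P, Summable fun n => χ z n ω)
    (hηsum : ∀ z ∈ F, ∀ᵐ ω ∂P, Summable fun n => η z n ω)
    (hint : ∀ z ∈ F, ∀ n, Integrable (fun ω => φ ‖x n ω - z‖) P)
    (hineq : ∀ z ∈ F, ∀ᵐ ω ∂P, ∀ n,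
      (P[fun ω' => φ ‖x (n + 1) ω' - z‖ | sigmaFinSeq x n]) ω + ϑ z n ω ≤
        (1 + χ z n ω) * φ ‖x n ω - z‖ + η z n ω) :
    ∀ z ∈ F, ∀ᵐ ω ∂P, Summable fun n => ϑ z n ω := by
  intro z hz
  have hfejer : RobbinsSiegmund.IsStochasticQuasiFejer P (sigmaFinSeqFiltration hxm)
      (fun n ω => φ ‖x n ω - z‖) (χ z) (ϑ z) (η z) :=
    { f_nonneg := fun n ω => hφnonneg _ (norm_nonneg _)
      χ_nonneg := hχnonneg z hz
      ϑ_nonneg := hϑnonneg z hz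
      η_nonneg := hηnonneg z hz
      adapted_f := fun n => (measurable_comp_norm_sub_of_monotoneOn hφmono.monotoneOn z).comp
        (measurable_sigmaFinSeq x n)
      adapted_χ := hχmeas z hz
      adapted_ϑ := hϑmeas z hz
      adapted_η := hηmeas z hz
      integrable_f := hint z hz
      condExp_add_le := hineq z hz }
  exact hfejer.ae_summable (hχsum z hz) (hηsum z hz)

theorem stochastic_quasiFejer_summable_theta
    {H : Type*} [NormedAddCommGroup H] [InnerProductSpace ℝ H] [CompleteSpace H]
    [SecondCountableTopology H] [MeasurableSpace H] [BorelSpace H]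
    {Ω : Type*} [MeasurableSpace Ω] (P : Measure Ω) [IsProbabilityMeasure P]
    (F : Set H) (hFne : F.Nonempty) (hFcl : IsClosed F)
    (φ : ℝ → ℝ) (hφmono : StrictMonoOn φ (Set.Ici (0 : ℝ)))
    (hφnonneg : ∀ t, 0 ≤ t → 0 ≤ φ t) (hφtop : Tendsto φ atTop atTop)
    (x : ℕ → Ω → H) (hxm : ∀ n, Measurable (x n))
    (χ ϑ η : H → ℕ → Ω → ℝ)
    (hχnonneg : ∀ z ∈ F, ∀ n, ∀ ω, 0 ≤ χ z n ω)
    (hϑnonneg : ∀ z ∈ F, ∀ n, ∀ ω, 0 ≤ ϑ z n ω)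
    (hηnonneg : ∀ z ∈ F, ∀ n, ∀ ω, 0 ≤ η z n ω)
    (hχmeas : ∀ z ∈ F, ∀ n, Measurable[sigmaFinSeq x n] (χ z n))
    (hϑmeas : ∀ z ∈ F, ∀ n, Measurable[sigmaFinSeq x n] (ϑ z n))
    (hηmeas : ∀ z ∈ F, ∀ n, Measurable[sigmaFinSeq x n] (η z n))
    (hχsum : ∀ z ∈ F, ∀ᵐ ω ∂P, Summable fun n => χ z n ω)
    (hηsum : ∀ z ∈ F, ∀ᵐ ω ∂P, Summable fun n => η z n ω)
    (hint : ∀ z ∈ F, ∀ n, Integrable (fun ω => φ ‖x n ω - z‖) P)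
    (hineq : ∀ z ∈ F, ∀ᵐ ω ∂P, ∀ n,
      (P[fun ω' => φ ‖x (n + 1) ω' - z‖ | sigmaFinSeq x n]) ω + ϑ z n ω ≤
        (1 + χ z n ω) * φ ‖x n ω - z‖ + η z n ω) :
    ∀ z ∈ F, ∀ᵐ ω ∂P, Summable fun n => ϑ z n ω :=
  stochastic_quasiFejer_summable_theta_general P F φ hφmono hφnonneg x hxm χ ϑ η hχnonneg hϑnonneg
    hηnonneg hχmeas hϑmeas hηmeas hχsum hηsum hint hineq
end

section
/- Suppose that for every z ∈ F the stochastic quasi-Fejér inequality E[φ(‖x_{n+1} − z‖) | 𝓧_n] + ϑ_n(z) ≤ (1 + χ_n(z)) φ(‖x_n − z‖) + η_n(z) holds P-a.s. for every n ∈ ℕ, and that P-almost surely every weak sequential cluster point of (x_n)_{n∈ℕ} belongs to F. Then (x_n)_{n∈ℕ} converges weakly P-almost surely to an F-valued random variable, i.e. there exists a measurable x: Ω → H with x(ω) ∈ F for P-a.e. ω and x_n(ω) ⇀ x(ω) weakly for P-a.e. ω. -/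
open MeasureTheory Filter Topology
open scoped RealInnerProductSpace

/-- `p` is a weak sequential cluster point of the sequence `u`. -/
def IsWeakClusterPt {E : Type*} [NormedAddCommGroup E] [InnerProductSpace ℝ E]
    (p : E) (u : ℕ → E) : Prop :=
  ∃ k : ℕ → ℕ, StrictMono k ∧
    ∀ y : E, Filter.Tendsto (fun j => (inner ℝ (u (k j)) y : ℝ)) Filter.atTop
      (nhds (inner ℝ p y : ℝ))

/-- `p` is a strong sequential cluster point of the sequence `u`. -/
def IsStrongClusterPt {E : Type*} [NormedAddCommGroup E] (p : E) (u : ℕ → E) : Prop :=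
  ∃ k : ℕ → ℕ, StrictMono k ∧ Filter.Tendsto (fun j => u (k j)) Filter.atTop (nhds p)

/-!
Fix `z ∈ F` and put `Y n = φ ‖x n - z‖`. With the predictable weights
`w n = exp (-∑ k < n, (χ k z + η k z))`, the process `w n * (Y n + 1)` is a nonnegative
supermartingale, because `(1 + χ) Y + η + 1 ≤ exp (χ + η) (Y + 1)`. It converges almost surely,
and so does `Y n`, since `w n` tends to a positive limit when `χ` and `η` are summable. As `φ` is
strictly increasing and coercive, `‖x n - z‖` converges as well, and since the property is closed
in `z` and `F` is separable, almost surely this holds for all `z ∈ F` at once.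

The rest is Opial's argument, path by path: the sequence is bounded, so it has weak cluster
points, all of them in `F`; for two of them `q, q'` the polarization identity shows that
`⟪x n, q - q'⟫` converges, which forces `q = q'`. Finally, the weak limit is measurable because
its orthogonal projections onto an exhausting sequence of finite-dimensional subspaces are.
-/

open scoped NNReal

theorem exp_neg_add_mul_le {a b y : ℝ} (ha : 0 ≤ a) (hb : 0 ≤ b) (hy : 0 ≤ y) :
    Real.exp (-(a + b)) * ((1 + a) * y + b + 1) ≤ y + 1 :=
  calc Real.exp (-(a + b)) * ((1 + a) * y + b + 1)
      ≤ Real.exp (-(a + b)) * (Real.exp (a + b) * (y + 1)) := by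
        gcongr
        nlinarith [Real.add_one_le_exp (a + b)]
    _ = y + 1 := by rw [← mul_assoc, ← Real.exp_add, neg_add_cancel, Real.exp_zero, one_mul]

theorem StrictMonoOn.exists_tendsto_of_tendsto_comp {φ : ℝ → ℝ} (hφ : StrictMonoOn φ (Set.Ici 0))
    (hφtop : Tendsto φ atTop atTop) {t : ℕ → ℝ} (ht : ∀ n, 0 ≤ t n) {L : ℝ}
    (hL : Tendsto (fun n => φ (t n)) atTop (𝓝 L)) : ∃ a, Tendsto t atTop (𝓝 a) := by
  have hbdd : IsBoundedUnder (· ≤ ·) atTop t := by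
    obtain ⟨T, hT⟩ := (hφtop.eventually_gt_atTop (L + 1)).exists_forall_of_atTop
    refine ⟨T, eventually_map.2 ?_⟩
    filter_upwards [hL.eventually (eventually_lt_nhds (lt_add_one L))] with n hn
    exact not_lt.1 fun h => (hT _ h.le).asymm hn
  have hbdd' : IsBoundedUnder (· ≥ ·) atTop t := ⟨0, eventually_map.2 (Eventually.of_forall ht)⟩
  refine ⟨_, tendsto_of_liminf_eq_limsup rfl
    (le_antisymm (not_lt.1 fun hlt => ?_) (liminf_le_limsup hbdd hbdd')) hbdd hbdd'⟩
  obtain ⟨s, hs, hs'⟩ := exists_between hlt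
  obtain ⟨r, hsr, hr⟩ := exists_between hs'
  have hs0 : 0 ≤ s :=
    (le_liminf_of_le hbdd.isCoboundedUnder_ge (Eventually.of_forall ht)).trans hs.le
  -- `t` is frequently below `s` and frequently above `r`, so `φ r ≤ L ≤ φ s`
  have hLs : L ≤ φ s := le_of_tendsto_of_frequently hL <|
    (frequently_lt_of_liminf_lt hbdd.isCoboundedUnder_ge hs).mono fun n hn =>
      (hφ (ht n) hs0 hn).le
  have hrL : φ r ≤ L := ge_of_tendsto_of_frequently hL <|
    (frequently_lt_of_lt_limsup hbdd'.isCoboundedUnder_le hr).mono fun n hn =>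
      (hφ (hs0.trans hsr.le) (ht n) hn).le
  exact (hφ hs0 (hs0.trans hsr.le) hsr).not_ge (hrL.trans hLs)

theorem MonotoneOn.measurable_comp_norm {E : Type*} [SeminormedAddCommGroup E] [MeasurableSpace E]
    [OpensMeasurableSpace E] {φ : ℝ → ℝ} (hφ : MonotoneOn φ (Set.Ici 0)) :
    Measurable fun v : E => φ ‖v‖ := by
  have hmono : Monotone fun t => φ (max t 0) := fun s t hst =>
    hφ (le_max_right s 0) (le_max_right t 0) (max_le_max hst le_rfl)
  simpa only [Function.comp_def, max_eq_left (norm_nonneg _)] using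
    hmono.measurable.comp (continuous_norm (E := E)).measurable

theorem isClosed_setOf_exists_tendsto_of_lipschitzWith {X : Type*} [PseudoMetricSpace X]
    {f : ℕ → X → ℝ} {K : ℝ≥0} (hf : ∀ n, LipschitzWith K (f n)) :
    IsClosed {x | ∃ L, Tendsto (fun n => f n x) atTop (𝓝 L)} := by
  have hcauchy : IsClosed {x | Tendsto (fun p : ℕ × ℕ => dist (f p.1 x) (f p.2 x)) atTop (𝓝 0)} :=
    (LipschitzWith.uniformEquicontinuous _ _ fun p : ℕ × ℕ => LipschitzWith.dist.comp
      ((hf p.1).prodMk (hf p.2))).equicontinuous.isClosed_setOfPred_tendsto continuous_const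
  convert hcauchy using 1
  ext x
  rw [Set.mem_ofPred_eq, Set.mem_ofPred_eq,
    ← cauchySeq_iff_tendsto_dist_atTop_0 (u := fun n => f n x), CauchySeq,
    cauchy_map_iff_exists_tendsto]

section NormedGroup

variable {E : Type*} [SeminormedAddCommGroup E]

theorem isClosed_setOf_exists_tendsto_norm_sub (u : ℕ → E) :
    IsClosed {z | ∃ L, Tendsto (fun n => ‖u n - z‖) atTop (𝓝 L)} := by
  simpa only [dist_eq_norm] using
    isClosed_setOf_exists_tendsto_of_lipschitzWith fun n => LipschitzWith.dist_right (u n)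

theorem exists_norm_le_of_tendsto_norm_sub {u : ℕ → E} {z : E} {L : ℝ}
    (hu : Tendsto (fun n => ‖u n - z‖) atTop (𝓝 L)) : ∃ C, ∀ n, ‖u n‖ ≤ C := by
  obtain ⟨C, hC⟩ := hu.bddAbove_range
  exact ⟨C + ‖z‖, fun n => (norm_le_norm_sub_add (u n) z).trans
    (add_le_add_left (hC ⟨n, rfl⟩) _)⟩

end NormedGroup

section Probability

variable {Ω : Type*} {m0 : MeasurableSpace Ω} {μ : Measure Ω} {𝓕 : Filtration ℕ m0}

theorem MeasureTheory.Supermartingale.ae_exists_tendsto_of_nonneg [IsFiniteMeasure μ]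
    {V : ℕ → Ω → ℝ} (hV : Supermartingale V 𝓕 μ) (hV0 : ∀ n ω, 0 ≤ V n ω) :
    ∀ᵐ ω ∂μ, ∃ c, Tendsto (fun n => V n ω) atTop (𝓝 c) := by
  have hbdd : ∀ n, eLpNorm ((-V) n) 1 μ ≤ (∫ ω, V 0 ω ∂μ).toNNReal := by
    intro n
    rw [Pi.neg_apply, eLpNorm_neg, eLpNorm_one_eq_lintegral_enorm,
      ← ofReal_integral_norm_eq_lintegral_enorm (hV.integrable n), ENNReal.ofReal_coe_nnreal.symm]
    gcongr
    simpa only [Real.norm_of_nonneg (hV0 n _), setIntegral_univ] using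
      (hV.setIntegral_le (Nat.zero_le n) MeasurableSet.univ).trans (Real.le_coe_toNNReal _)
  filter_upwards [hV.neg.exists_ae_tendsto_of_bdd hbdd] with ω ⟨c, hc⟩
  exact ⟨-c, by simpa using hc.neg⟩

theorem supermartingale_exp_neg_sum_mul_add_one [IsFiniteMeasure μ] {Y χ η : ℕ → Ω → ℝ}
    (hY : StronglyAdapted 𝓕 Y) (hχ : StronglyAdapted 𝓕 χ) (hη : StronglyAdapted 𝓕 η)
    (hYint : ∀ n, Integrable (Y n) μ) (hY0 : ∀ n ω, 0 ≤ Y n ω) (hχ0 : ∀ n ω, 0 ≤ χ n ω)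
    (hη0 : ∀ n ω, 0 ≤ η n ω)
    (hle : ∀ n, μ[Y (n + 1) | 𝓕 n] ≤ᵐ[μ] fun ω => (1 + χ n ω) * Y n ω + η n ω) :
    Supermartingale
      (fun n ω => Real.exp (-∑ k ∈ Finset.range n, (χ k ω + η k ω)) * (Y n ω + 1)) 𝓕 μ := by
  set w : ℕ → Ω → ℝ := fun n ω => Real.exp (-∑ k ∈ Finset.range n, (χ k ω + η k ω)) with hw_def
  have hw : ∀ m n, m ≤ n + 1 → StronglyMeasurable[𝓕 n] (w m) := fun m n hmn => by
    have hk : ∀ k ∈ Finset.range m, k ≤ n := fun k hk => by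
      have := Finset.mem_range.1 hk
      omega
    exact Real.continuous_exp.comp_stronglyMeasurable (Finset.stronglyMeasurable_fun_sum _
      fun k hk' => ((hχ k).mono (𝓕.mono (hk k hk'))).add ((hη k).mono (𝓕.mono (hk k hk')))).neg
  have hw1 : ∀ n ω, w n ω ≤ 1 := fun n ω => Real.exp_le_one_iff.2 <| neg_nonpos.2 <|
    Finset.sum_nonneg fun k _ => add_nonneg (hχ0 k ω) (hη0 k ω)
  have hint : ∀ n, Integrable (fun ω => w n ω * (Y n ω + 1)) μ := fun n =>
    ((hYint n).add (integrable_const 1)).mono'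
      (((hw n n n.le_succ).mono (𝓕.le n)).aestronglyMeasurable.mul
        ((hYint n).add (integrable_const 1)).aestronglyMeasurable)
      (Eventually.of_forall fun ω => by
        rw [norm_mul, Real.norm_of_nonneg (Real.exp_nonneg _),
          Real.norm_of_nonneg (by linarith [hY0 n ω])]
        exact mul_le_of_le_one_left (by linarith [hY0 n ω]) (hw1 n ω))
  refine supermartingale_nat
    (fun n => (hw n n n.le_succ).mul ((hY n).add stronglyMeasurable_const)) hint fun n => ?_
  have hpull : μ[fun ω => w (n + 1) ω * (Y (n + 1) ω + 1) | 𝓕 n] =ᵐ[μ]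
      fun ω => w (n + 1) ω * ((μ[Y (n + 1) | 𝓕 n]) ω + 1) := by
    refine (condExp_mul_of_stronglyMeasurable_left (hw (n + 1) n le_rfl) (hint (n + 1))
      ((hYint (n + 1)).add (integrable_const 1))).trans ?_
    filter_upwards [condExp_add (hYint (n + 1)) (integrable_const (1 : ℝ)) (𝓕 n)] with ω h
    change w (n + 1) ω * μ[Y (n + 1) + fun _ => 1 | 𝓕 n] ω = _
    rw [h, Pi.add_apply, condExp_const (𝓕.le n)]
  filter_upwards [hpull, hle n] with ω h1 h2
  rw [h1]
  calc w (n + 1) ω * ((μ[Y (n + 1) | 𝓕 n]) ω + 1)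
      ≤ w (n + 1) ω * ((1 + χ n ω) * Y n ω + η n ω + 1) := by gcongr
    _ = w n ω * (Real.exp (-(χ n ω + η n ω)) * ((1 + χ n ω) * Y n ω + η n ω + 1)) := by
      simp only [hw_def, Finset.sum_range_succ, neg_add, Real.exp_add]
      ring
    _ ≤ w n ω * (Y n ω + 1) := by
      gcongr
      exact exp_neg_add_mul_le (hχ0 n ω) (hη0 n ω) (hY0 n ω)

/-- The convergence part of the Robbins–Siegmund theorem. -/
theorem ae_exists_tendsto_of_condExp_le_mul_add [IsFiniteMeasure μ] {Y χ η : ℕ → Ω → ℝ}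
    (hY : StronglyAdapted 𝓕 Y) (hχ : StronglyAdapted 𝓕 χ) (hη : StronglyAdapted 𝓕 η)
    (hYint : ∀ n, Integrable (Y n) μ) (hY0 : ∀ n ω, 0 ≤ Y n ω) (hχ0 : ∀ n ω, 0 ≤ χ n ω)
    (hη0 : ∀ n ω, 0 ≤ η n ω) (hχsum : ∀ᵐ ω ∂μ, Summable fun n => χ n ω)
    (hηsum : ∀ᵐ ω ∂μ, Summable fun n => η n ω)
    (hle : ∀ n, μ[Y (n + 1) | 𝓕 n] ≤ᵐ[μ] fun ω => (1 + χ n ω) * Y n ω + η n ω) :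
    ∀ᵐ ω ∂μ, ∃ L, Tendsto (fun n => Y n ω) atTop (𝓝 L) := by
  filter_upwards [(supermartingale_exp_neg_sum_mul_add_one hY hχ hη hYint hY0 hχ0 hη0
      hle).ae_exists_tendsto_of_nonneg fun n ω => by positivity [hY0 n ω], hχsum, hηsum]
    with ω ⟨c, hc⟩ hχω hηω
  have hsum := ((hχω.add hηω).hasSum.tendsto_sum_nat).rexp
  refine ⟨c * Real.exp (∑' k, (χ k ω + η k ω)) - 1, ((hc.mul hsum).sub_const 1).congr fun n => ?_⟩
  rw [mul_right_comm, ← Real.exp_add, neg_add_cancel, Real.exp_zero, one_mul, add_sub_cancel_right]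

theorem ae_forall_mem_of_isClosed {X : Type*} [TopologicalSpace X] [SecondCountableTopology X]
    {F : Set X} {p : Ω → X → Prop} (hp : ∀ ω, IsClosed {z | p ω z})
    (h : ∀ z ∈ F, ∀ᵐ ω ∂μ, p ω z) : ∀ᵐ ω ∂μ, ∀ z ∈ F, p ω z := by
  rcases F.eq_empty_or_nonempty with rfl | hF
  · simp
  have := hF.to_subtype
  obtain ⟨e, he⟩ := TopologicalSpace.exists_dense_seq F
  filter_upwards [ae_all_iff.2 fun i => h (e i) (e i).2] with ω hω z hz
  exact he.induction_on (p := fun z : F => p ω z) ⟨z, hz⟩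
    ((hp ω).preimage continuous_subtype_val) hω

end Probability

section WeakConvergence

variable {H : Type*} [NormedAddCommGroup H] [InnerProductSpace ℝ H]

theorem exists_tendsto_inner_of_denseRange [CompleteSpace H] {u : ℕ → H} {C : ℝ}
    (hu : ∀ n, ‖u n‖ ≤ C) {c : ℕ → H} (hc : DenseRange c)
    (hconv : ∀ i, ∃ L, Tendsto (fun n => ⟪u n, c i⟫) atTop (𝓝 L)) :
    ∃ p, ∀ y, Tendsto (fun n => ⟪u n, y⟫) atTop (𝓝 ⟪p, y⟫) := by
  have hlip : ∀ n, LipschitzWith C.toNNReal (fun y => ⟪u n, y⟫) := fun n =>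
    LipschitzWith.of_dist_le_mul fun y y' => by
      rw [Real.dist_eq, dist_eq_norm, ← inner_sub_right]
      exact (abs_real_inner_le_norm _ _).trans
        (mul_le_mul_of_nonneg_right ((hu n).trans C.le_coe_toNNReal) (norm_nonneg _))
  have hall : ∀ y, ∃ L, Tendsto (fun n => ⟪u n, y⟫) atTop (𝓝 L) := fun y =>
    hc.induction_on y (isClosed_setOf_exists_tendsto_of_lipschitzWith hlip) hconv
  choose f hf using hall
  let ℓ := continuousLinearMapOfTendsto (fun n => innerSL ℝ (u n)) (tendsto_pi_nhds.2 hf)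
  refine ⟨(InnerProductSpace.toDual ℝ H).symm ℓ, fun y => ?_⟩
  rw [InnerProductSpace.toDual_symm_apply]
  exact hf y

theorem exists_isWeakClusterPt_of_norm_le [CompleteSpace H] [TopologicalSpace.SeparableSpace H]
    {u : ℕ → H} {C : ℝ} (hu : ∀ n, ‖u n‖ ≤ C) : ∃ p, IsWeakClusterPt p u := by
  obtain ⟨c, hc⟩ := TopologicalSpace.exists_dense_seq H
  have hmem : ∀ n, (fun i => ⟪u n, c i⟫) ∈
      Set.univ.pi fun i => Set.Icc (-(C * ‖c i‖)) (C * ‖c i‖) :=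
    fun n => Set.mem_univ_pi.2 fun i => abs_le.1 <| (abs_real_inner_le_norm _ _).trans
      (mul_le_mul_of_nonneg_right (hu n) (norm_nonneg _))
  obtain ⟨s, -, k, hk, hks⟩ := (isCompact_univ_pi fun i => isCompact_Icc).tendsto_subseq hmem
  obtain ⟨p, hp⟩ := exists_tendsto_inner_of_denseRange (fun n => hu (k n)) hc
    fun i => ⟨s i, tendsto_pi_nhds.1 hks i⟩
  exact ⟨p, k, hk, hp⟩

theorem IsWeakClusterPt.eq_of_tendsto_norm_sub {u : ℕ → H} {q q' : H}
    (hq : IsWeakClusterPt q u) (hq' : IsWeakClusterPt q' u) {L L' : ℝ}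
    (hL : Tendsto (fun n => ‖u n - q‖) atTop (𝓝 L))
    (hL' : Tendsto (fun n => ‖u n - q'‖) atTop (𝓝 L')) : q = q' := by
  have hpol : ∀ v : H, ⟪v, q - q'⟫ = (‖v - q'‖ ^ 2 - ‖v - q‖ ^ 2 + ‖q‖ ^ 2 - ‖q'‖ ^ 2) / 2 := by
    intro v
    rw [norm_sub_sq_real, norm_sub_sq_real, inner_sub_right]
    ring
  have hlim : Tendsto (fun n => ⟪u n, q - q'⟫) atTop
      (𝓝 ((L' ^ 2 - L ^ 2 + ‖q‖ ^ 2 - ‖q'‖ ^ 2) / 2)) := by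
    simp_rw [hpol]
    exact ((((hL'.pow 2).sub (hL.pow 2)).add_const _).sub_const _).div_const 2
  obtain ⟨k, hk, hqk⟩ := hq
  obtain ⟨k', hk', hqk'⟩ := hq'
  have h : ⟪q, q - q'⟫ = ⟪q', q - q'⟫ :=
    (tendsto_nhds_unique (hqk _) (hlim.comp hk.tendsto_atTop)).trans
      (tendsto_nhds_unique (hqk' _) (hlim.comp hk'.tendsto_atTop)).symm
  rwa [← sub_eq_zero, ← inner_sub_left, inner_self_eq_zero, sub_eq_zero] at h

theorem IsWeakClusterPt.tendsto_inner [CompleteSpace H] [TopologicalSpace.SeparableSpace H]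
    {u : ℕ → H} {C : ℝ} (hu : ∀ n, ‖u n‖ ≤ C) {p : H} (hp : IsWeakClusterPt p u)
    (huniq : ∀ q, IsWeakClusterPt q u → q = p) (y : H) :
    Tendsto (fun n => ⟪u n, y⟫) atTop (𝓝 ⟪p, y⟫) := by
  rw [Metric.tendsto_atTop]
  by_contra! hfar
  obtain ⟨ε, hε, hfreq⟩ := hfar
  obtain ⟨k, hk, hkfar⟩ := extraction_of_frequently_atTop
    (P := fun n => ε ≤ dist ⟪u n, y⟫ ⟪p, y⟫) (frequently_atTop.2 hfreq)
  obtain ⟨q, k', hk', hq⟩ := exists_isWeakClusterPt_of_norm_le fun n => hu (k n)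
  obtain rfl : q = p := huniq q ⟨k ∘ k', hk.comp hk', hq⟩
  obtain ⟨j, hj⟩ := Metric.tendsto_atTop.1 (hq y) ε hε
  exact (hkfar (k' j)).not_gt (hj j le_rfl)

/-- Opial's lemma. -/
theorem exists_tendsto_inner_of_tendsto_norm_sub [CompleteSpace H]
    [TopologicalSpace.SeparableSpace H] {F : Set H} (hF : F.Nonempty) {u : ℕ → H}
    (hnorm : ∀ z ∈ F, ∃ L, Tendsto (fun n => ‖u n - z‖) atTop (𝓝 L))
    (hcluster : ∀ p, IsWeakClusterPt p u → p ∈ F) :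
    ∃ p ∈ F, ∀ y, Tendsto (fun n => ⟪u n, y⟫) atTop (𝓝 ⟪p, y⟫) := by
  obtain ⟨z, hz⟩ := hF
  obtain ⟨C, hC⟩ := exists_norm_le_of_tendsto_norm_sub (hnorm z hz).choose_spec
  obtain ⟨p, hp⟩ := exists_isWeakClusterPt_of_norm_le hC
  have huniq : ∀ q, IsWeakClusterPt q u → q = p := fun q hq =>
    hq.eq_of_tendsto_norm_sub hp (hnorm q (hcluster q hq)).choose_spec
      (hnorm p (hcluster p hp)).choose_spec
  exact ⟨p, hcluster p hp, hp.tendsto_inner hC huniq⟩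

theorem exists_norm_le_of_tendsto_inner [CompleteSpace H] {u : ℕ → H} {p : H}
    (hu : ∀ y, Tendsto (fun n => ⟪u n, y⟫) atTop (𝓝 ⟪p, y⟫)) : ∃ C, ∀ n, ‖u n‖ ≤ C := by
  obtain ⟨C, hC⟩ := banach_steinhaus (g := fun n => innerSL ℝ (u n)) fun y => by
    obtain ⟨C, hC⟩ := (hu y).norm.bddAbove_range
    exact ⟨C, fun n => hC ⟨n, rfl⟩⟩
  exact ⟨C, fun n => (innerSL_apply_norm ℝ (u n)).symm.trans_le (hC n)⟩

variable [SecondCountableTopology H] [MeasurableSpace H] [BorelSpace H]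
  {Ω : Type*} [MeasurableSpace Ω]

theorem measurable_of_forall_measurable_inner {f : Ω → H}
    (hf : ∀ y, Measurable fun ω => ⟪f ω, y⟫) : Measurable f := by
  obtain ⟨c, hc⟩ := TopologicalSpace.exists_dense_seq H
  let U : ℕ → Submodule ℝ H := fun n => Submodule.span ℝ (c '' Set.Iic n)
  have : ∀ n, FiniteDimensional ℝ (U n) := fun n =>
    FiniteDimensional.span_of_finite ℝ ((Set.finite_Iic n).image c)
  have hU : Monotone U := fun m n hmn =>
    Submodule.span_mono (Set.image_mono (Set.Iic_subset_Iic.2 hmn))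
  have hdense : ⊤ ≤ (⨆ n, U n).topologicalClosure := by
    intro v _
    rw [← SetLike.mem_coe, Submodule.topologicalClosure_coe]
    refine Dense.mono ?_ hc v
    rintro _ ⟨i, rfl⟩
    exact Submodule.mem_iSup_of_mem i (Submodule.subset_span ⟨i, Set.self_mem_Iic, rfl⟩)
  refine measurable_of_tendsto_metrizable (f := fun n ω => (U n).starProjection (f ω))
    (fun n => ?_) (tendsto_pi_nhds.2 fun ω => Submodule.starProjection_tendsto_self U hU (f ω) hdense)
  let b := stdOrthonormalBasis ℝ (U n)
  simp_rw [Submodule.starProjection_apply, b.orthogonalProjectionOnto_apply_eq_sum,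
    Submodule.coe_sum, Submodule.coe_smul, real_inner_comm]
  exact Finset.measurable_sum _ fun i _ => (hf _).smul_const _

theorem exists_measurable_eq_of_tendsto_inner [CompleteSpace H] {x : ℕ → Ω → H}
    (hx : ∀ n, Measurable (x n)) :
    ∃ xlim : Ω → H, Measurable xlim ∧ ∀ ω p,
      (∀ y, Tendsto (fun n => ⟪x n ω, y⟫) atTop (𝓝 ⟪p, y⟫)) → xlim ω = p := by
  classical
  obtain ⟨c, hc⟩ := TopologicalSpace.exists_dense_seq H
  have hinner : ∀ n y, Measurable fun ω => ⟪x n ω, y⟫ := fun n y =>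
    (hx n).inner measurable_const
  -- a countable description of the set where `x · ω` converges weakly
  let G : Set Ω := {ω | (∃ C : ℕ, ∀ n, ‖x n ω‖ ≤ C) ∧
    ∀ i, ∃ L, Tendsto (fun n => ⟪x n ω, c i⟫) atTop (𝓝 L)}
  have hbdd : MeasurableSet {ω | ∃ C : ℕ, ∀ n, ‖x n ω‖ ≤ C} := by
    simp only [Set.ofPred_exists, Set.ofPred_forall]
    exact .iUnion fun C => .iInter fun n => measurableSet_le (hx n).norm measurable_const
  have hG : MeasurableSet G := by
    simp only [G, Set.ofPred_and, Set.ofPred_forall (p := fun i ω => ∃ L, _)]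
    exact hbdd.inter (.iInter fun i => measurableSet_exists_tendsto fun n => hinner n (c i))
  have hGlim : ∀ ω ∈ G, ∃ p, ∀ y, Tendsto (fun n => ⟪x n ω, y⟫) atTop (𝓝 ⟪p, y⟫) :=
    fun ω ⟨⟨C, hC⟩, hconv⟩ => exists_tendsto_inner_of_denseRange hC hc hconv
  let xlim : Ω → H := fun ω => if h : ω ∈ G then (hGlim ω h).choose else 0
  have hxlim : ∀ ω ∈ G, ∀ y, Tendsto (fun n => ⟪x n ω, y⟫) atTop (𝓝 ⟪xlim ω, y⟫) :=
    fun ω h => by simpa only [xlim, dif_pos h] using (hGlim ω h).choose_spec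
  refine ⟨xlim, measurable_of_forall_measurable_inner fun y => ?_, fun ω p hp => ?_⟩
  · have : (fun ω => ⟪xlim ω, y⟫) =
        G.piecewise (fun ω => liminf (fun n => ⟪x n ω, y⟫) atTop) 0 := by
      ext ω
      by_cases h : ω ∈ G
      · simp [h, (hxlim ω h y).liminf_eq]
      · simp [h, xlim]
    rw [this]
    exact (Measurable.liminf fun n => hinner n y).piecewise hG measurable_const
  · have hω : ω ∈ G := by
      obtain ⟨C, hC⟩ := exists_norm_le_of_tendsto_inner hp
      exact ⟨⟨⌈C⌉₊, fun n => (hC n).trans (Nat.le_ceil C)⟩, fun i => ⟨_, hp (c i)⟩⟩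
    exact ext_inner_right ℝ fun y => tendsto_nhds_unique (hxlim ω hω y) (hp y)

end WeakConvergence

theorem stochastic_quasiFejer_weak_convergence_general
    {H : Type*} [NormedAddCommGroup H] [InnerProductSpace ℝ H] [CompleteSpace H]
    [SecondCountableTopology H] [MeasurableSpace H] [BorelSpace H]
    {Ω : Type*} [MeasurableSpace Ω] (P : Measure Ω) [IsProbabilityMeasure P]
    (F : Set H) (hFne : F.Nonempty)
    (φ : ℝ → ℝ) (hφmono : StrictMonoOn φ (Set.Ici (0 : ℝ)))
    (hφnonneg : ∀ t, 0 ≤ t → 0 ≤ φ t) (hφtop : Tendsto φ atTop atTop)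
    (x : ℕ → Ω → H) (hxm : ∀ n, Measurable (x n))
    (χ ϑ η : H → ℕ → Ω → ℝ)
    (hχnonneg : ∀ z ∈ F, ∀ n, ∀ ω, 0 ≤ χ z n ω)
    (hϑnonneg : ∀ z ∈ F, ∀ n, ∀ ω, 0 ≤ ϑ z n ω)
    (hηnonneg : ∀ z ∈ F, ∀ n, ∀ ω, 0 ≤ η z n ω)
    (hχmeas : ∀ z ∈ F, ∀ n, Measurable[sigmaFinSeq x n] (χ z n))
    (hηmeas : ∀ z ∈ F, ∀ n, Measurable[sigmaFinSeq x n] (η z n))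
    (hχsum : ∀ z ∈ F, ∀ᵐ ω ∂P, Summable fun n => χ z n ω)
    (hηsum : ∀ z ∈ F, ∀ᵐ ω ∂P, Summable fun n => η z n ω)
    (hint : ∀ z ∈ F, ∀ n, Integrable (fun ω => φ ‖x n ω - z‖) P)
    (hineq : ∀ z ∈ F, ∀ᵐ ω ∂P, ∀ n,
      (P[fun ω' => φ ‖x (n + 1) ω' - z‖ | sigmaFinSeq x n]) ω + ϑ z n ω ≤
        (1 + χ z n ω) * φ ‖x n ω - z‖ + η z n ω)
    (hweak : ∀ᵐ ω ∂P, ∀ p : H, IsWeakClusterPt p (fun n => x n ω) → p ∈ F) :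
    ∃ xlim : Ω → H, Measurable xlim ∧ (∀ᵐ ω ∂P, xlim ω ∈ F) ∧
      ∀ᵐ ω ∂P, ∀ y : H,
        Tendsto (fun n => (inner ℝ (x n ω) y : ℝ)) atTop (𝓝 (inner ℝ (xlim ω) y : ℝ)) := by
  -- `sigmaFinSeq x` is the natural filtration of `x`
  let 𝓕 := Filtration.natural x fun n => (hxm n).stronglyMeasurable
  have hφm : Measurable fun v : H => φ ‖v‖ := hφmono.monotoneOn.measurable_comp_norm
  have hnorm : ∀ z ∈ F, ∀ᵐ ω ∂P, ∃ L, Tendsto (fun n => ‖x n ω - z‖) atTop (𝓝 L) := by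
    intro z hz
    filter_upwards [ae_exists_tendsto_of_condExp_le_mul_add (𝓕 := 𝓕)
      (Y := fun n ω => φ ‖x n ω - z‖) (fun n => (hφm.comp
        ((Filtration.stronglyAdapted_natural (u := x) _ n).measurable.sub_const z)).stronglyMeasurable)
      (fun n => (hχmeas z hz n).stronglyMeasurable) (fun n => (hηmeas z hz n).stronglyMeasurable)
      (hint z hz) (fun n ω => hφnonneg _ (norm_nonneg _)) (hχnonneg z hz) (hηnonneg z hz)
      (hχsum z hz) (hηsum z hz) fun n => by
        filter_upwards [hineq z hz] with ω h
        exact (le_add_of_nonneg_right (hϑnonneg z hz n ω)).trans (h n)] with ω ⟨L, hL⟩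
    exact hφmono.exists_tendsto_of_tendsto_comp hφtop (fun n => norm_nonneg _) hL
  have hlim : ∀ᵐ ω ∂P, ∃ p ∈ F, ∀ y, Tendsto (fun n => ⟪x n ω, y⟫) atTop (𝓝 ⟪p, y⟫) := by
    filter_upwards [ae_forall_mem_of_isClosed
      (fun ω => isClosed_setOf_exists_tendsto_norm_sub fun n => x n ω) hnorm, hweak]
      with ω hω hcluster using exists_tendsto_inner_of_tendsto_norm_sub hFne hω hcluster
  obtain ⟨xlim, hxlim_meas, hxlim⟩ := exists_measurable_eq_of_tendsto_inner hxm
  refine ⟨xlim, hxlim_meas, ?_, ?_⟩ <;> filter_upwards [hlim] with ω ⟨p, hpF, hp⟩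
  · rwa [hxlim ω p hp]
  · rwa [hxlim ω p hp]

theorem stochastic_quasiFejer_weak_convergence
    {H : Type*} [NormedAddCommGroup H] [InnerProductSpace ℝ H] [CompleteSpace H]
    [SecondCountableTopology H] [MeasurableSpace H] [BorelSpace H]
    {Ω : Type*} [MeasurableSpace Ω] (P : Measure Ω) [IsProbabilityMeasure P]
    (F : Set H) (hFne : F.Nonempty) (hFcl : IsClosed F)
    (φ : ℝ → ℝ) (hφmono : StrictMonoOn φ (Set.Ici (0 : ℝ)))
    (hφnonneg : ∀ t, 0 ≤ t → 0 ≤ φ t) (hφtop : Tendsto φ atTop atTop)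
    (x : ℕ → Ω → H) (hxm : ∀ n, Measurable (x n))
    (χ ϑ η : H → ℕ → Ω → ℝ)
    (hχnonneg : ∀ z ∈ F, ∀ n, ∀ ω, 0 ≤ χ z n ω)
    (hϑnonneg : ∀ z ∈ F, ∀ n, ∀ ω, 0 ≤ ϑ z n ω)
    (hηnonneg : ∀ z ∈ F, ∀ n, ∀ ω, 0 ≤ η z n ω)
    (hχmeas : ∀ z ∈ F, ∀ n, Measurable[sigmaFinSeq x n] (χ z n))
    (hϑmeas : ∀ z ∈ F, ∀ n, Measurable[sigmaFinSeq x n] (ϑ z n))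
    (hηmeas : ∀ z ∈ F, ∀ n, Measurable[sigmaFinSeq x n] (η z n))
    (hχsum : ∀ z ∈ F, ∀ᵐ ω ∂P, Summable fun n => χ z n ω)
    (hηsum : ∀ z ∈ F, ∀ᵐ ω ∂P, Summable fun n => η z n ω)
    (hint : ∀ z ∈ F, ∀ n, Integrable (fun ω => φ ‖x n ω - z‖) P)
    (hineq : ∀ z ∈ F, ∀ᵐ ω ∂P, ∀ n,
      (P[fun ω' => φ ‖x (n + 1) ω' - z‖ | sigmaFinSeq x n]) ω + ϑ z n ω ≤
        (1 + χ z n ω) * φ ‖x n ω - z‖ + η z n ω)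
    (hweak : ∀ᵐ ω ∂P, ∀ p : H, IsWeakClusterPt p (fun n => x n ω) → p ∈ F) :
    ∃ xlim : Ω → H, Measurable xlim ∧ (∀ᵐ ω ∂P, xlim ω ∈ F) ∧
      ∀ᵐ ω ∂P, ∀ y : H,
        Tendsto (fun n => (inner ℝ (x n ω) y : ℝ)) atTop (𝓝 (inner ℝ (xlim ω) y : ℝ)) :=
  stochastic_quasiFejer_weak_convergence_general P F hFne φ hφmono hφnonneg hφtop x hxm χ ϑ η
    hχnonneg hϑnonneg hηnonneg hχmeas hηmeas hχsum hηsum hint hineq hweak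
end

section
/- Suppose that for every z ∈ F the stochastic quasi-Fejér inequality E[φ(‖x_{n+1} − z‖) | 𝓧_n] + ϑ_n(z) ≤ (1 + χ_n(z)) φ(‖x_n − z‖) + η_n(z) holds P-a.s. for every n ∈ ℕ, and that P-almost surely (x_n)_{n∈ℕ} has a strong sequential cluster point belonging to F. Then (x_n)_{n∈ℕ} converges strongly (in norm) P-almost surely to an F-valued random variable. -/
/-!
For each `z ∈ F`, the Robbins–Siegmund theorem turns the stochastic quasi-Fejér inequality into
almost sure convergence of `φ ‖x n - z‖`. Dividing by `∏ k < n, (1 + χ k)` reduces Robbins–Siegmund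
to the case `χ = 0`; there `W n - ∑ k < n, η k`, stopped before the partial sums of `η` exceed a
level `a`, is a supermartingale bounded below by `-a`, hence converges, and almost surely some
level is never exceeded.

Since `F` is separable, almost surely `φ ‖x n - z‖` converges simultaneously for all `z` in a
countable dense subset `D ⊆ F`. On that event a cluster point `p ∈ F` is the limit: for `z ∈ D`
close to `p` the subsequence approaching `p` bounds the limit of `φ ‖x n - z‖` by `φ` of a small
number, and strict monotonicity of `φ` then keeps the whole sequence close to `z`, hence to `p`.
-/

open MeasureTheory Filter Topology
open scoped RealInnerProductSpace

theorem StrictMonoOn.eventually_lt_of_tendsto_comp {α : Type*} {l : Filter α} {φ : ℝ → ℝ}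
    (hφ : StrictMonoOn φ (Set.Ici 0)) {t : α → ℝ} (ht : ∀ a, 0 ≤ t a) {c r r' : ℝ}
    (hc : Tendsto (fun a => φ (t a)) l (𝓝 c)) (hfreq : ∃ᶠ a in l, t a ≤ r) (hr : r < r') :
    ∀ᶠ a in l, t a < r' := by
  obtain ⟨a, ha⟩ := hfreq.exists
  have hr0 : 0 ≤ r := (ht a).trans ha
  have hc_le : c ≤ φ r := le_of_tendsto_of_frequently hc <| hfreq.mono fun a ha =>
    hφ.monotoneOn (ht a) hr0 ha
  filter_upwards [hc.eventually_lt_const (hc_le.trans_lt (hφ hr0 (hr0.trans hr.le) hr))]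
    with a ha
  exact (hφ.lt_iff_lt (ht a) (hr0.trans hr.le)).1 ha

theorem tendsto_of_mapClusterPt_of_tendsto_comp_dist {α X : Type*} [PseudoMetricSpace X]
    {l : Filter α} {φ : ℝ → ℝ} (hφ : StrictMonoOn φ (Set.Ici 0)) {u : α → X} {p : X} {D : Set X}
    (hpD : p ∈ closure D) (hD : ∀ z ∈ D, ∃ c, Tendsto (fun a => φ (dist (u a) z)) l (𝓝 c))
    (hp : MapClusterPt p l u) : Tendsto u l (𝓝 p) := by
  refine Metric.tendsto_nhds.2 fun ε hε => ?_
  obtain ⟨z, hzD, hpz⟩ := Metric.mem_closure_iff.1 hpD (ε / 4) (by positivity)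
  obtain ⟨c, hc⟩ := hD z hzD
  have hfreq : ∃ᶠ a in l, dist (u a) z ≤ ε / 2 :=
    (hp.frequently (Metric.ball_mem_nhds p (by positivity : 0 < ε / 4))).mono fun a ha => by
      linarith [dist_triangle (u a) p z, Metric.mem_ball.1 ha]
  filter_upwards [hφ.eventually_lt_of_tendsto_comp (fun _ => dist_nonneg) hc hfreq
    (by linarith : ε / 2 < 3 * ε / 4)] with a ha
  linarith [dist_triangle (u a) z p, dist_comm p z]

theorem MonotoneOn.measurable_comp_of_nonneg {α : Type*} [MeasurableSpace α] {φ : ℝ → ℝ}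
    (hφ : MonotoneOn φ (Set.Ici 0)) {f : α → ℝ} (hf : Measurable f) (hf0 : ∀ a, 0 ≤ f a) :
    Measurable fun a => φ (f a) := by
  have hmono : Monotone fun t => φ (max t 0) := fun s t hst =>
    hφ (le_max_right s 0) (le_max_right t 0) (max_le_max hst le_rfl)
  simpa only [Function.comp_def, max_eq_left (hf0 _)] using hmono.measurable.comp hf

theorem tendsto_prod_range_one_add_of_summable {χ : ℕ → ℝ} (hχ : Summable χ) :
    ∃ c, Tendsto (fun n => ∏ k ∈ Finset.range n, (1 + χ k)) atTop (𝓝 c) :=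
  ⟨_, (Real.multipliable_one_add_of_summable hχ).hasProd.tendsto_prod_nat⟩

namespace MeasureTheory

variable {Ω : Type*} {m0 : MeasurableSpace Ω} {μ : Measure Ω}

theorem condExp_indicator_sub_nonpos {m : MeasurableSpace Ω} (hm : m ≤ m0)
    [SigmaFinite (μ.trim hm)] {s : Set Ω}
    {X Y : Ω → ℝ} (hs : MeasurableSet[m] s) (hX : Integrable X μ) (hY : StronglyMeasurable[m] Y)
    (hYs : Integrable (s.indicator Y) μ) (hXY : μ[X | m] ≤ᵐ[μ] Y) :
    μ[s.indicator (X - Y) | m] ≤ᵐ[μ] 0 := by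
  rw [Set.indicator_sub']
  filter_upwards [condExp_sub (hX.indicator (hm s hs)) hYs m, condExp_indicator hX hs, hXY]
    with ω hsub hind hω
  rw [hsub, Pi.sub_apply, hind, condExp_of_stronglyMeasurable hm (hY.indicator hs) hYs]
  by_cases hωs : ω ∈ s <;> simp [hωs, hω]

theorem Supermartingale.exists_ae_tendsto_of_const_le [IsFiniteMeasure μ]
    {ℱ : Filtration ℕ m0} {f : ℕ → Ω → ℝ} {a : ℝ} (hf : Supermartingale f ℱ μ)
    (hbdd : ∀ n ω, a ≤ f n ω) : ∀ᵐ ω ∂μ, ∃ c, Tendsto (fun n => f n ω) atTop (𝓝 c) := by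
  -- `|f n| ≤ f n + 2|a|`, and the expectations of a supermartingale decrease
  have hL1 : ∀ n, eLpNorm ((-f) n) 1 μ ≤ (∫ ω, f 0 ω ∂μ + 2 * |a| * μ.real Set.univ).toNNReal := by
    intro n
    rw [Pi.neg_apply, eLpNorm_neg, eLpNorm_one_eq_lintegral_enorm,
      ← ofReal_integral_norm_eq_lintegral_enorm (hf.integrable n)]
    refine ENNReal.ofReal_le_ofReal ?_
    calc ∫ ω, ‖f n ω‖ ∂μ ≤ ∫ ω, (f n ω + 2 * |a|) ∂μ := by
          refine integral_mono (hf.integrable n).norm ((hf.integrable n).add (integrable_const _))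
            fun ω => ?_
          have := hbdd n ω
          rw [Real.norm_eq_abs, abs_le]
          constructor <;> linarith [neg_abs_le a, le_abs_self a]
      _ = ∫ ω, f n ω ∂μ + 2 * |a| * μ.real Set.univ := by
          rw [integral_add (hf.integrable n) (integrable_const _), integral_const, smul_eq_mul,
            mul_comm]
      _ ≤ ∫ ω, f 0 ω ∂μ + 2 * |a| * μ.real Set.univ := by
          have : ∫ ω, f n ω ∂μ ≤ ∫ ω, f 0 ω ∂μ := by
            simpa only [Measure.restrict_univ] using
              hf.setIntegral_le (Nat.zero_le n) MeasurableSet.univ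
          linarith
  filter_upwards [hf.neg.exists_ae_tendsto_of_bdd hL1] with ω ⟨c, hc⟩
  exact ⟨-c, by simpa using hc.neg⟩

end MeasureTheory

section StoppedCompensated

variable {Ω : Type*} {m0 : MeasurableSpace Ω} {μ : Measure Ω} {ℱ : Filtration ℕ m0}
  {W e : ℕ → Ω → ℝ} {a : ℝ}

/-- `W n - ∑ k < n, e k`, stopped before the partial sums of `e` exceed `a`. -/
noncomputable def stoppedCompensated (W e : ℕ → Ω → ℝ) (a : ℝ) (n : ℕ) : Ω → ℝ :=
  W 0 + ∑ k ∈ Finset.range n,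
    {ω | ∑ i ∈ Finset.range (k + 1), e i ω ≤ a}.indicator (W (k + 1) - (W k + e k))

theorem stoppedCompensated_succ (n : ℕ) :
    stoppedCompensated W e a (n + 1) = stoppedCompensated W e a n +
      {ω | ∑ i ∈ Finset.range (n + 1), e i ω ≤ a}.indicator (W (n + 1) - (W n + e n)) := by
  simp only [stoppedCompensated, Finset.sum_range_succ, add_assoc]

theorem stoppedCompensated_apply_of_sum_le (he : ∀ n ω, 0 ≤ e n ω) {n : ℕ} {ω : Ω}
    (hn : ∑ i ∈ Finset.range n, e i ω ≤ a) :
    stoppedCompensated W e a n ω = W n ω - ∑ i ∈ Finset.range n, e i ω := by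
  induction n with
  | zero => simp [stoppedCompensated]
  | succ n ih =>
    simp only [stoppedCompensated_succ, Pi.add_apply, Set.indicator_apply, Set.mem_ofPred_eq,
      if_pos hn]
    rw [Finset.sum_range_succ] at hn ⊢
    rw [ih (by linarith [he n ω]), Pi.sub_apply, Pi.add_apply]
    ring

theorem neg_le_stoppedCompensated (hW : ∀ n ω, 0 ≤ W n ω) (he : ∀ n ω, 0 ≤ e n ω) (ha : 0 ≤ a)
    (n : ℕ) (ω : Ω) : -a ≤ stoppedCompensated W e a n ω := by
  induction n with
  | zero => simpa [stoppedCompensated] using (neg_nonpos.2 ha).trans (hW 0 ω)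
  | succ n ih =>
    by_cases hω : ∑ i ∈ Finset.range (n + 1), e i ω ≤ a
    · rw [stoppedCompensated_apply_of_sum_le he hω]
      linarith [hW (n + 1) ω]
    · simpa only [stoppedCompensated_succ, Pi.add_apply, Set.indicator_apply, Set.mem_ofPred_eq,
        if_neg hω, add_zero] using ih

theorem supermartingale_stoppedCompensated [IsFiniteMeasure μ] (hW : ∀ n ω, 0 ≤ W n ω)
    (hWadp : StronglyAdapted ℱ W) (hWint : ∀ n, Integrable (W n) μ)
    (he : ∀ n ω, 0 ≤ e n ω) (headp : Adapted ℱ e)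
    (hcond : ∀ n, μ[W (n + 1) | ℱ n] ≤ᵐ[μ] W n + e n) :
    Supermartingale (stoppedCompensated W e a) ℱ μ := by
  set G : ℕ → Set Ω := fun n => {ω | ∑ i ∈ Finset.range (n + 1), e i ω ≤ a}
  have hG : ∀ n, MeasurableSet[ℱ n] (G n) := fun n =>
    measurableSet_le (Finset.measurable_sum _ fun i hi =>
      (headp i).mono (ℱ.mono (Finset.mem_range_succ_iff.1 hi)) le_rfl) measurable_const
  have hWe : ∀ n, StronglyMeasurable[ℱ n] (W n + e n) := fun n =>
    (hWadp n).add (headp n).stronglyMeasurable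
  -- on `G n` the summand `e n` is at most `a`, which makes `W n + e n` integrable there
  have hWe_int : ∀ n, Integrable ((G n).indicator (W n + e n)) μ := fun n => by
    refine ((hWint n).add (integrable_const |a|)).mono'
      (((hWe n).indicator (hG n)).mono (ℱ.le n)).aestronglyMeasurable (ae_of_all _ fun ω => ?_)
    by_cases hω : ω ∈ G n
    · have hea : e n ω ≤ a := (Finset.single_le_sum (fun i _ => he i ω)
        (Finset.self_mem_range_succ n)).trans hω
      rw [Set.indicator_of_mem hω, Pi.add_apply, Pi.add_apply,
        Real.norm_of_nonneg (add_nonneg (hW n ω) (he n ω))]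
      linarith [le_abs_self a]
    · rw [Set.indicator_of_notMem hω, norm_zero, Pi.add_apply]
      exact add_nonneg (hW n ω) (abs_nonneg a)
  have hinc_int : ∀ n, Integrable ((G n).indicator (W (n + 1) - (W n + e n))) μ := fun n => by
    rw [Set.indicator_sub']
    exact ((hWint (n + 1)).indicator (ℱ.le n _ (hG n))).sub (hWe_int n)
  have hadp : StronglyAdapted ℱ (stoppedCompensated W e a) := fun n =>
    ((hWadp 0).mono (ℱ.mono n.zero_le)).add <| Finset.stronglyMeasurable_sum _ fun k hk =>
      (((hWadp (k + 1)).sub ((hWe k).mono (ℱ.mono k.le_succ))).indicator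
        (ℱ.mono k.le_succ _ (hG k))).mono (ℱ.mono (Finset.mem_range.1 hk))
  have hint : ∀ n, Integrable (stoppedCompensated W e a n) μ := fun n =>
    (hWint 0).add (integrable_finsetSum' _ fun k _ => hinc_int k)
  refine supermartingale_nat hadp hint fun n => ?_
  rw [stoppedCompensated_succ]
  filter_upwards [condExp_add (hint n) (hinc_int n) (ℱ n),
    condExp_indicator_sub_nonpos (ℱ.le n) (hG n) (hWint (n + 1)) (hWe n) (hWe_int n) (hcond n)]
    with ω hadd hinc
  rw [hadd, Pi.add_apply, condExp_of_stronglyMeasurable (ℱ.le n) (hadp n) (hint n)]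
  exact add_le_of_nonpos_right hinc

theorem ae_exists_tendsto_sub_sum_of_sum_le [IsFiniteMeasure μ] (hW : ∀ n ω, 0 ≤ W n ω)
    (hWadp : StronglyAdapted ℱ W) (hWint : ∀ n, Integrable (W n) μ)
    (he : ∀ n ω, 0 ≤ e n ω) (headp : Adapted ℱ e)
    (hcond : ∀ n, μ[W (n + 1) | ℱ n] ≤ᵐ[μ] W n + e n) (ha : 0 ≤ a) :
    ∀ᵐ ω ∂μ, (∀ n, ∑ i ∈ Finset.range n, e i ω ≤ a) →
      ∃ c, Tendsto (fun n => W n ω - ∑ i ∈ Finset.range n, e i ω) atTop (𝓝 c) := by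
  filter_upwards [(supermartingale_stoppedCompensated hW hWadp hWint he headp hcond
    (a := a)).exists_ae_tendsto_of_const_le (neg_le_stoppedCompensated hW he ha)]
    with ω ⟨c, hc⟩ hω
  exact ⟨c, hc.congr fun n => stoppedCompensated_apply_of_sum_le he (hω n)⟩

theorem ae_exists_tendsto_of_condExp_le_add [IsFiniteMeasure μ] (hW : ∀ n ω, 0 ≤ W n ω)
    (hWadp : StronglyAdapted ℱ W) (hWint : ∀ n, Integrable (W n) μ)
    (he : ∀ n ω, 0 ≤ e n ω) (headp : Adapted ℱ e)
    (hesum : ∀ᵐ ω ∂μ, Summable fun n => e n ω)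
    (hcond : ∀ n, μ[W (n + 1) | ℱ n] ≤ᵐ[μ] W n + e n) :
    ∀ᵐ ω ∂μ, ∃ c, Tendsto (fun n => W n ω) atTop (𝓝 c) := by
  have hstop := ae_all_iff.2 fun N : ℕ =>
    ae_exists_tendsto_sub_sum_of_sum_le hW hWadp hWint he headp hcond N.cast_nonneg
  filter_upwards [hstop, hesum] with ω hω hsum
  obtain ⟨c, hc⟩ := hω ⌈∑' n, e n ω⌉₊ fun n =>
    (hsum.sum_le_tsum _ fun i _ => he i ω).trans (Nat.le_ceil _)
  exact ⟨c + ∑' n, e n ω, by simpa using hc.add hsum.hasSum.tendsto_sum_nat⟩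

end StoppedCompensated

section RobbinsSiegmund

variable {Ω : Type*} {m0 : MeasurableSpace Ω} {μ : Measure Ω} {ℱ : Filtration ℕ m0}

theorem ae_exists_tendsto_of_condExp_le_one_add_mul_add [IsFiniteMeasure μ] {V χ η : ℕ → Ω → ℝ}
    (hV : ∀ n ω, 0 ≤ V n ω) (hVadp : StronglyAdapted ℱ V) (hVint : ∀ n, Integrable (V n) μ)
    (hχ : ∀ n ω, 0 ≤ χ n ω) (hχadp : Adapted ℱ χ) (hη : ∀ n ω, 0 ≤ η n ω) (hηadp : Adapted ℱ η)
    (hχsum : ∀ᵐ ω ∂μ, Summable fun n => χ n ω) (hηsum : ∀ᵐ ω ∂μ, Summable fun n => η n ω)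
    (hcond : ∀ n, μ[V (n + 1) | ℱ n] ≤ᵐ[μ] (1 + χ n) * V n + η n) :
    ∀ᵐ ω ∂μ, ∃ c, Tendsto (fun n => V n ω) atTop (𝓝 c) := by
  obtain ⟨A, hA_one_le, hA_succ, hA_meas, hA_lim⟩ : ∃ A : ℕ → Ω → ℝ, (∀ n ω, 1 ≤ A n ω) ∧
      (∀ n ω, A (n + 1) ω = A n ω * (1 + χ n ω)) ∧ (∀ {k n}, k ≤ n + 1 → Measurable[ℱ n] (A k)) ∧
      ∀ᵐ ω ∂μ, ∃ d, Tendsto (fun n => A n ω) atTop (𝓝 d) :=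
    ⟨fun n ω => ∏ k ∈ Finset.range n, (1 + χ k ω),
      fun n ω => Finset.one_le_prod fun k _ => le_add_of_nonneg_right (hχ k ω),
      fun n ω => Finset.prod_range_succ _ n,
      fun hkn => Finset.measurable_prod _ fun i hi => measurable_const.add
        ((hχadp i).mono (ℱ.mono (by rw [Finset.mem_range] at hi; omega)) le_rfl),
      hχsum.mono fun ω hω => tendsto_prod_range_one_add_of_summable hω⟩
  have hA_pos : ∀ n ω, 0 < A n ω := fun n ω => one_pos.trans_le (hA_one_le n ω)
  have hW_meas : ∀ n, StronglyMeasurable[ℱ n] ((A n)⁻¹ * V n) := fun n =>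
    (hA_meas n.le_succ).inv.stronglyMeasurable.mul (hVadp n)
  have hW_int : ∀ n, Integrable ((A n)⁻¹ * V n) μ := fun n =>
    (hVint n).mono' ((hW_meas n).mono (ℱ.le n)).aestronglyMeasurable <| ae_of_all _ fun ω => by
      rw [Pi.mul_apply, Pi.inv_apply, norm_mul, norm_inv, Real.norm_of_nonneg (hA_pos n ω).le,
        Real.norm_of_nonneg (hV n ω)]
      exact inv_mul_le_of_le_mul₀ (hA_pos n ω).le (hV n ω)
        (le_mul_of_one_le_left (hV n ω) (hA_one_le n ω))
  have hW_cond : ∀ n, μ[(A (n + 1))⁻¹ * V (n + 1) | ℱ n] ≤ᵐ[μ]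
      (A n)⁻¹ * V n + η n / A (n + 1) := fun n => by
    filter_upwards [condExp_mul_of_stronglyMeasurable_left
      (hA_meas le_rfl).inv.stronglyMeasurable (hW_int (n + 1)) (hVint (n + 1)), hcond n]
      with ω hmul hω
    have h1 : 1 + χ n ω ≠ 0 := by linarith [hχ n ω]
    have h2 : A n ω ≠ 0 := (hA_pos n ω).ne'
    rw [hmul]
    calc (A (n + 1) ω)⁻¹ * μ[V (n + 1) | ℱ n] ω
        ≤ (A (n + 1) ω)⁻¹ * ((1 + χ n ω) * V n ω + η n ω) :=
          mul_le_mul_of_nonneg_left hω (inv_nonneg.2 (hA_pos _ ω).le)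
      _ = (A n ω)⁻¹ * V n ω + η n ω / A (n + 1) ω := by
          rw [hA_succ]
          field_simp
  have hW_lim := ae_exists_tendsto_of_condExp_le_add (W := fun n => (A n)⁻¹ * V n)
    (e := fun n => η n / A (n + 1))
    (fun n ω => mul_nonneg (inv_nonneg.2 (hA_pos n ω).le) (hV n ω)) hW_meas hW_int
    (fun n ω => div_nonneg (hη n ω) (hA_pos _ ω).le) (fun n => (hηadp n).div (hA_meas le_rfl))
    (hηsum.mono fun ω hω => hω.of_nonneg_of_le (fun n => div_nonneg (hη n ω) (hA_pos _ ω).le)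
      fun n => div_le_self (hη n ω) (hA_one_le _ ω)) hW_cond
  filter_upwards [hW_lim, hA_lim] with ω ⟨c, hc⟩ ⟨d, hd⟩
  refine ⟨c * d, (hc.mul hd).congr fun n => ?_⟩
  simp only [Pi.mul_apply, Pi.inv_apply]
  field_simp [(hA_pos n ω).ne']

end RobbinsSiegmund

theorem stochastic_quasiFejer_strong_convergence_of_strong_cluster_general
    {H : Type*} [NormedAddCommGroup H] [SecondCountableTopology H] [MeasurableSpace H]
    [BorelSpace H]
    {Ω : Type*} [MeasurableSpace Ω] (P : Measure Ω) [IsProbabilityMeasure P]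
    (F : Set H) (φ : ℝ → ℝ) (hφmono : StrictMonoOn φ (Set.Ici (0 : ℝ)))
    (hφnonneg : ∀ t, 0 ≤ t → 0 ≤ φ t)
    (x : ℕ → Ω → H) (hxm : ∀ n, Measurable (x n))
    (χ ϑ η : H → ℕ → Ω → ℝ)
    (hχnonneg : ∀ z ∈ F, ∀ n, ∀ ω, 0 ≤ χ z n ω)
    (hϑnonneg : ∀ z ∈ F, ∀ n, ∀ ω, 0 ≤ ϑ z n ω)
    (hηnonneg : ∀ z ∈ F, ∀ n, ∀ ω, 0 ≤ η z n ω)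
    (hχmeas : ∀ z ∈ F, ∀ n, Measurable[sigmaFinSeq x n] (χ z n))
    (hηmeas : ∀ z ∈ F, ∀ n, Measurable[sigmaFinSeq x n] (η z n))
    (hχsum : ∀ z ∈ F, ∀ᵐ ω ∂P, Summable fun n => χ z n ω)
    (hηsum : ∀ z ∈ F, ∀ᵐ ω ∂P, Summable fun n => η z n ω)
    (hint : ∀ z ∈ F, ∀ n, Integrable (fun ω => φ ‖x n ω - z‖) P)
    (hineq : ∀ z ∈ F, ∀ᵐ ω ∂P, ∀ n,
      (P[fun ω' => φ ‖x (n + 1) ω' - z‖ | sigmaFinSeq x n]) ω + ϑ z n ω ≤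
        (1 + χ z n ω) * φ ‖x n ω - z‖ + η z n ω)
    (hstrong : ∀ᵐ ω ∂P, ∃ p ∈ F, IsStrongClusterPt p (fun n => x n ω)) :
    ∃ xlim : Ω → H, Measurable xlim ∧ (∀ᵐ ω ∂P, xlim ω ∈ F) ∧
      ∀ᵐ ω ∂P, Tendsto (fun n => x n ω) atTop (𝓝 (xlim ω)) := by
  have hx_sm : ∀ n, StronglyMeasurable (x n) := fun n => (hxm n).stronglyMeasurable
  -- `ℱ n` unfolds to `sigmaFinSeq x n`, so the hypotheses on `χ` and `η` say they are adapted
  set ℱ := Filtration.natural x hx_sm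
  have hV_adp : ∀ z, StronglyAdapted ℱ fun n ω => φ ‖x n ω - z‖ := fun z n =>
    ((hφmono.monotoneOn.measurable_comp_of_nonneg (measurable_id.sub_const z).norm
      fun _ => norm_nonneg _).comp
        (Filtration.stronglyAdapted_natural hx_sm n).measurable).stronglyMeasurable
  have hconv : ∀ z ∈ F, ∀ᵐ ω ∂P, ∃ c, Tendsto (fun n => φ ‖x n ω - z‖) atTop (𝓝 c) :=
    fun z hz => ae_exists_tendsto_of_condExp_le_one_add_mul_add (ℱ := ℱ)
      (fun n ω => hφnonneg _ (norm_nonneg _)) (hV_adp z) (hint z hz) (hχnonneg z hz)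
      (hχmeas z hz) (hηnonneg z hz) (hηmeas z hz) (hχsum z hz) (hηsum z hz) fun n =>
        (hineq z hz).mono fun ω hω => (le_add_of_nonneg_right (hϑnonneg z hz n ω)).trans (hω n)
  obtain ⟨D, hDF, hD, hFD⟩ :=
    (TopologicalSpace.IsSeparable.of_separableSpace F).exists_countable_dense_subset
  have hlim : ∀ᵐ ω ∂P, ∃ p ∈ F, Tendsto (fun n => x n ω) atTop (𝓝 p) := by
    filter_upwards [(ae_ball_iff hD).2 fun z hz => hconv z (hDF hz), hstrong]
      with ω hω ⟨p, hpF, k, hk, hkp⟩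
    refine ⟨p, hpF, tendsto_of_mapClusterPt_of_tendsto_comp_dist hφmono (hFD hpF) ?_
      (MapClusterPt.of_comp hk.tendsto_atTop hkp.mapClusterPt)⟩
    simpa only [dist_eq_norm] using hω
  obtain ⟨xlim, hxlim, hx_tendsto⟩ := measurable_limit_of_tendsto_metrizable_ae
    (fun n => (hxm n).aemeasurable) (hlim.mono fun ω ⟨p, _, hp⟩ => ⟨p, hp⟩)
  refine ⟨xlim, hxlim, ?_, hx_tendsto⟩
  filter_upwards [hlim, hx_tendsto] with ω ⟨p, hpF, hp⟩ hω
  rwa [tendsto_nhds_unique hω hp]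

theorem stochastic_quasiFejer_strong_convergence_of_strong_cluster
    {H : Type*} [NormedAddCommGroup H] [InnerProductSpace ℝ H] [CompleteSpace H]
    [SecondCountableTopology H] [MeasurableSpace H] [BorelSpace H]
    {Ω : Type*} [MeasurableSpace Ω] (P : Measure Ω) [IsProbabilityMeasure P]
    (F : Set H) (hFne : F.Nonempty) (hFcl : IsClosed F)
    (φ : ℝ → ℝ) (hφmono : StrictMonoOn φ (Set.Ici (0 : ℝ)))
    (hφnonneg : ∀ t, 0 ≤ t → 0 ≤ φ t) (hφtop : Tendsto φ atTop atTop)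
    (x : ℕ → Ω → H) (hxm : ∀ n, Measurable (x n))
    (χ ϑ η : H → ℕ → Ω → ℝ)
    (hχnonneg : ∀ z ∈ F, ∀ n, ∀ ω, 0 ≤ χ z n ω)
    (hϑnonneg : ∀ z ∈ F, ∀ n, ∀ ω, 0 ≤ ϑ z n ω)
    (hηnonneg : ∀ z ∈ F, ∀ n, ∀ ω, 0 ≤ η z n ω)
    (hχmeas : ∀ z ∈ F, ∀ n, Measurable[sigmaFinSeq x n] (χ z n))
    (hϑmeas : ∀ z ∈ F, ∀ n, Measurable[sigmaFinSeq x n] (ϑ z n))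
    (hηmeas : ∀ z ∈ F, ∀ n, Measurable[sigmaFinSeq x n] (η z n))
    (hχsum : ∀ z ∈ F, ∀ᵐ ω ∂P, Summable fun n => χ z n ω)
    (hηsum : ∀ z ∈ F, ∀ᵐ ω ∂P, Summable fun n => η z n ω)
    (hint : ∀ z ∈ F, ∀ n, Integrable (fun ω => φ ‖x n ω - z‖) P)
    (hineq : ∀ z ∈ F, ∀ᵐ ω ∂P, ∀ n,
      (P[fun ω' => φ ‖x (n + 1) ω' - z‖ | sigmaFinSeq x n]) ω + ϑ z n ω ≤
        (1 + χ z n ω) * φ ‖x n ω - z‖ + η z n ω)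
    (hstrong : ∀ᵐ ω ∂P, ∃ p ∈ F, IsStrongClusterPt p (fun n => x n ω)) :
    ∃ xlim : Ω → H, Measurable xlim ∧ (∀ᵐ ω ∂P, xlim ω ∈ F) ∧
      ∀ᵐ ω ∂P, Tendsto (fun n => x n ω) atTop (𝓝 (xlim ω)) :=
  stochastic_quasiFejer_strong_convergence_of_strong_cluster_general P F φ hφmono hφnonneg x hxm χ ϑ
    η hχnonneg hϑnonneg hηnonneg hχmeas hηmeas hχsum hηsum hint hineq hstrong
end
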